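/- Let R > 0, let μ be a probability measure on ℝ supported in [−R, R], let δ > 0, and let p_δ be the density of μ * γ_δ. Then for every x ≥ R, ∫_x^∞ p_δ(t) dt ≤ (4/3) · (δ/(x − R + √δ)) · p_δ(x). -/

import Mathlib

/-!
Since `p_δ(t) = ∫ g_s(t) dμ(s)` with `g_s` the Gaussian density of mean `s` and variance `δ`,
Fubini reduces the claim to each `g_s` with `s ≤ R`, for which it is a Mills-ratio estimate:
`H(t) = 4/3 · δ/(t - s + √δ) · g_s(t)` is nonnegative and satisfies
`-H' - g_s = g_s · (t - s - √δ)² / (3 (t - s + √δ)²) ≥ 0`, so `H(x)` dominates `∫_x^∞ g_s`.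
-/

open MeasureTheory Real

/-- Density of the convolution μ * γ_δ on ℝ:
p_δ(t) = ∫ (2πδ)^{-1/2} exp(−(t−s)²/(2δ)) dμ(s). -/
noncomputable def pdelta (δ : ℝ) (μ : Measure ℝ) (t : ℝ) : ℝ :=
  ∫ s, (Real.sqrt (2 * π * δ))⁻¹ * Real.exp (-((t - s) ^ 2) / (2 * δ)) ∂μ

open Set Filter ProbabilityTheory
open scoped NNReal

theorem setIntegral_Ioi_le_of_hasDerivAt {f H H' : ℝ → ℝ} {a : ℝ} (hfi : IntegrableOn f (Ioi a))
    (hH : ∀ t, a ≤ t → HasDerivAt H (H' t) t) (hfH : ∀ t, a ≤ t → f t ≤ -H' t)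
    (hH_nonneg : ∀ t, a ≤ t → 0 ≤ H t) :
    ∫ t in Ioi a, f t ≤ H a := by
  refine le_of_tendsto (intervalIntegral_tendsto_integral_Ioi a hfi tendsto_id)
    (eventually_atTop.2 ⟨a, fun b hab => ?_⟩)
  have hfi' : IntegrableOn f (Icc a b) := by
    rw [← integrableOn_Ici_iff_integrableOn_Ioi] at hfi
    exact hfi.mono_set Icc_subset_Ici_self
  have hFTC := intervalIntegral.integral_le_sub_of_hasDeriv_right_of_le (g := fun t => -H t) hab
    (fun t ht => (hH t ht.1).continuousAt.continuousWithinAt.neg)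
    (fun t ht => (hH t ht.1.le).neg.hasDerivWithinAt) hfi' (fun t ht => hfH t ht.1.le)
  simp only [id]
  linarith [hH_nonneg b hab]

theorem hasDerivAt_gaussianPDFReal (m : ℝ) (v : ℝ≥0) (x : ℝ) :
    HasDerivAt (gaussianPDFReal m v) (-(x - m) / v * gaussianPDFReal m v x) x := by
  have h : HasDerivAt (fun y => -(y - m) ^ 2 / (2 * (v : ℝ))) (-(x - m) / v) x :=
    ((((hasDerivAt_id' x).sub_const m).fun_pow 2).fun_neg.div_const (2 * (v : ℝ))).congr_deriv
      (by push_cast; ring)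
  rw [gaussianPDFReal_def]
  exact (h.exp.const_mul (√(2 * π * v))⁻¹).congr_deriv (by beta_reduce; ring)

theorem integral_Ioi_gaussianPDFReal_le {m x : ℝ} {v : ℝ≥0} (hmx : m ≤ x) (hv : v ≠ 0) :
    ∫ t in Ioi x, gaussianPDFReal m v t ≤ 4 / 3 * (v / (x - m + √v)) * gaussianPDFReal m v x := by
  set q := √(v : ℝ)
  have hq : 0 < q := Real.sqrt_pos.2 (by positivity)
  have hvq : (v : ℝ) = q ^ 2 := (Real.sq_sqrt v.2).symm
  have hpos : ∀ t, x ≤ t → 0 < t - m + q := fun t ht => by linarith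
  set g := gaussianPDFReal m v
  have hbound := setIntegral_Ioi_le_of_hasDerivAt (integrable_gaussianPDFReal m v).integrableOn
    (a := x) (H := fun t => 4 / 3 * v * ((t - m + q)⁻¹ * g t))
    (H' := fun t => 4 / 3 * v * (-((t - m + q) ^ 2)⁻¹ * g t + (t - m + q)⁻¹ * (-(t - m) / v * g t)))
    (fun t ht => ?deriv) (fun t ht => ?le) (fun t ht => ?nonneg)
  case deriv =>
    exact ((((hasDerivAt_id' t).sub_const m).add_const q).fun_inv (hpos t ht).ne').fun_mul
      (hasDerivAt_gaussianPDFReal m v t) |>.const_mul (4 / 3 * (v : ℝ)) |>.congr_deriv (by ring)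
  case le =>
    have hp := (hpos t ht).ne'
    have hg := gaussianPDFReal_nonneg m v t
    have key : -(4 / 3 * v * (-((t - m + q) ^ 2)⁻¹ * g t + (t - m + q)⁻¹ * (-(t - m) / v * g t)))
        - g t = g t * (t - m - q) ^ 2 / (3 * (t - m + q) ^ 2) := by
      rw [hvq]
      field_simp
      ring
    have : 0 ≤ g t * (t - m - q) ^ 2 / (3 * (t - m + q) ^ 2) := by positivity
    linarith
  case nonneg =>
    have := (hpos t ht).le
    have := gaussianPDFReal_nonneg m v t
    positivity
  exact hbound.trans_eq (by ring)

theorem integrable_uncurry_gaussianPDFReal (S : Set ℝ) {v : ℝ≥0} (hv : v ≠ 0) (μ : Measure ℝ)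
    [IsFiniteMeasure μ] :
    Integrable (Function.uncurry fun t s => gaussianPDFReal s v t) ((volume.restrict S).prod μ) := by
  have hcont : Continuous (Function.uncurry fun t s => gaussianPDFReal s v t) := by
    unfold gaussianPDFReal; fun_prop
  have hmeas := hcont.stronglyMeasurable
  rw [integrable_prod_iff' hmeas.aestronglyMeasurable]
  refine ⟨ae_of_all _ fun s => (integrable_gaussianPDFReal s v).integrableOn, ?_⟩
  refine Integrable.of_bound hmeas.norm.integral_prod_left.aestronglyMeasurable 1
    (ae_of_all _ fun s => ?_)
  have hg : ∀ t, 0 ≤ gaussianPDFReal s v t := gaussianPDFReal_nonneg s v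
  simp only [Function.uncurry_apply_pair, Real.norm_of_nonneg (hg _)]
  rw [Real.norm_of_nonneg (setIntegral_nonneg_of_ae (ae_of_all _ hg))]
  calc ∫ t in S, gaussianPDFReal s v t
      ≤ ∫ t, gaussianPDFReal s v t :=
        setIntegral_le_integral (integrable_gaussianPDFReal s v) (ae_of_all _ hg)
    _ = 1 := integral_gaussianPDFReal_eq_one s hv

theorem integrable_gaussianPDFReal_mean (v : ℝ≥0) (x : ℝ) (μ : Measure ℝ) [IsFiniteMeasure μ] :
    Integrable (fun m => gaussianPDFReal m v x) μ := by
  have hcont : Continuous fun m => gaussianPDFReal m v x := by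
    unfold gaussianPDFReal; fun_prop
  refine Integrable.of_bound hcont.aestronglyMeasurable (√(2 * π * v))⁻¹ (ae_of_all _ fun m => ?_)
  rw [Real.norm_of_nonneg (gaussianPDFReal_nonneg m v x), gaussianPDFReal]
  refine mul_le_of_le_one_right (by positivity) (exp_le_one_iff.2 ?_)
  exact div_nonpos_of_nonpos_of_nonneg (neg_nonpos.2 (sq_nonneg _)) (by positivity)

theorem stmt7_general (R δ : ℝ) (hδ : 0 < δ)
    (μ : Measure ℝ) [IsProbabilityMeasure μ] (hsupp : μ (Set.Icc (-R) R)ᶜ = 0) :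
    ∀ x : ℝ, R ≤ x →
      ∫ t in Set.Ioi x, pdelta δ μ t ≤
        4 / 3 * (δ / (x - R + Real.sqrt δ)) * pdelta δ μ x := by
  intro x hx
  set v : ℝ≥0 := ⟨δ, hδ.le⟩
  have hv : v ≠ 0 := ne_of_gt hδ
  have hint := integrable_uncurry_gaussianPDFReal (Ioi x) hv μ
  have hμR : ∀ᵐ s ∂μ, s ≤ R :=
    ae_iff.2 <| measure_mono_null (fun s (hs : ¬s ≤ R) (hs' : s ∈ Icc (-R) R) => hs hs'.2) hsupp
  have hpdelta : ∀ t, pdelta δ μ t = ∫ s, gaussianPDFReal s v t ∂μ := fun t => rfl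
  have hR' : 0 < x - R + √δ := by positivity
  calc ∫ t in Ioi x, pdelta δ μ t
      = ∫ s, (∫ t in Ioi x, gaussianPDFReal s v t) ∂μ := by
        simp only [hpdelta]; exact integral_integral_swap hint
    _ ≤ ∫ s, 4 / 3 * (δ / (x - R + √δ)) * gaussianPDFReal s v x ∂μ := by
        refine integral_mono_ae hint.integral_prod_right ?_ (hμR.mono fun s hs => ?_)
        · exact (integrable_gaussianPDFReal_mean v x μ).const_mul _
        · refine (integral_Ioi_gaussianPDFReal_le (hs.trans hx) hv).trans ?_
          have := gaussianPDFReal_nonneg s v x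
          change 4 / 3 * (δ / (x - s + √δ)) * _ ≤ 4 / 3 * (δ / (x - R + √δ)) * _
          gcongr
    _ = 4 / 3 * (δ / (x - R + √δ)) * pdelta δ μ x := by
        rw [integral_const_mul, hpdelta]

theorem stmt7 (R δ : ℝ) (hR : 0 < R) (hδ : 0 < δ)
    (μ : Measure ℝ) [IsProbabilityMeasure μ] (hsupp : μ (Set.Icc (-R) R)ᶜ = 0) :
    ∀ x : ℝ, R ≤ x →
      ∫ t in Set.Ioi x, pdelta δ μ t ≤
        4 / 3 * (δ / (x - R + Real.sqrt δ)) * pdelta δ μ x :=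
  stmt7_general R δ hδ μ hsupp
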